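/- There is a Borel equivalence relation E such that E₁ is not Borel reducible to E, yet E is not Borel bireducible with any idealistic equivalence relation. Specifically, assume there is a Borel equivalence relation E_H Borel reducible to a countable Borel equivalence relation F but not Borel bireducible with any countable Borel equivalence relation (Hjorth); assume also the Kechris–Louveau theorem (E₁ does not Borel reduce to any idealistic Borel equivalence relation), the Kechris–Macdonald theorem (if E' is idealistic and F Borel then E' ≤_B F implies E' ⊑_cB F), and that countable Borel equivalence relations are idealistic and their invariant Borel restrictions are countable Borel. Then E_H witnesses the claim. -/
import Mathlib


/-- `F` is idealistic (with a Borel assignment of nontrivial ccc σ-ideals to classes). -/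
def Idealistic {Z : Type*} [MeasurableSpace Z] (F : Z → Z → Prop) : Prop :=
  ∃ I : Z → Set (Set Z),
    (∀ z w, F z w → I z = I w) ∧
    (∀ z, ∀ D ∈ I z, D ⊆ {y | F z y}) ∧
    (∀ z, (∅ : Set Z) ∈ I z) ∧
    (∀ z, ∀ D D' : Set Z, D' ∈ I z → D ⊆ D' → D ∈ I z) ∧
    (∀ z, ∀ D : ℕ → Set Z, (∀ n, D n ∈ I z) → (⋃ n, D n) ∈ I z) ∧
    (∀ z, {y | F z y} ∉ I z) ∧
    (∀ z, ∀ 𝒟 : Set (Set Z), (∀ D ∈ 𝒟, D ⊆ {y | F z y} ∧ D ∉ I z) →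
      𝒟.PairwiseDisjoint id → 𝒟.Countable) ∧
    (∀ A : Set (Z × Z), MeasurableSet A →
      MeasurableSet {z | {y | F z y ∧ (z, y) ∈ A} ∈ I z})

/-- `E` is Borel reducible to `F`. -/
def BorelRed {X Y : Type*} [MeasurableSpace X] [MeasurableSpace Y]
    (E : X → X → Prop) (F : Y → Y → Prop) : Prop :=
  ∃ f : X → Y, Measurable f ∧ ∀ x x', E x x' ↔ F (f x) (f x')

/-- `E` is classwise Borel isomorphic to `F`. -/
def ClasswiseBorelIso {X Y : Type*} [MeasurableSpace X] [MeasurableSpace Y]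
    (E : X → X → Prop) (F : Y → Y → Prop) : Prop :=
  ∃ (f : X → Y) (g : Y → X),
    (Measurable f ∧ ∀ x x', E x x' ↔ F (f x) (f x')) ∧
    (Measurable g ∧ ∀ y y', F y y' ↔ E (g y) (g y')) ∧
    (∀ x, E (g (f x)) x) ∧ (∀ y, F (f (g y)) y)

/-- `F` is a countable Borel equivalence relation. -/
def CountableBorelER {W : Type*} [MeasurableSpace W] (F : W → W → Prop) : Prop :=
  Equivalence F ∧ MeasurableSet {p : W × W | F p.1 p.2} ∧ ∀ w, {w' | F w w'}.Countable

/-- The equivalence relation `E₁` of eventual agreement on `(2^ω)^ω`. -/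
def E1 (x y : ℕ → ℕ → Bool) : Prop := ∃ n : ℕ, ∀ m ≥ n, x m = y m


theorem borelRed_trans {X Y Z : Type*} [MeasurableSpace X] [MeasurableSpace Y]
    [MeasurableSpace Z] {E : X → X → Prop} {F : Y → Y → Prop} {G : Z → Z → Prop}
    (h1 : BorelRed E F) (h2 : BorelRed F G) : BorelRed E G := by
  obtain ⟨f, hf, hfr⟩ := h1
  obtain ⟨g, hg, hgr⟩ := h2
  exact ⟨g ∘ f, hg.comp hf, fun x x' => (hfr x x').trans (hgr (f x) (f x'))⟩

/-- **There is a Borel equivalence relation `E` with `E₁ ≰_B E` which is not Borel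
bireducible with any idealistic equivalence relation.** Assume Hjorth's example `E_H`
(Borel reducible to a countable Borel equivalence relation `F` but not Borel bireducible
with any countable Borel equivalence relation), the Kechris–Louveau theorem, the
Kechris–Macdonald theorem, that countable Borel equivalence relations are idealistic, and
that their invariant Borel restrictions are countable Borel. Then `E_H` witnesses the
claim. -/
theorem hjorth_example_not_bireducible_with_idealistic
    {XH YF : Type} [MeasurableSpace XH] [StandardBorelSpace XH]
    [MeasurableSpace YF] [StandardBorelSpace YF]
    (EH : XH → XH → Prop) (hEHeq : Equivalence EH)
    (hEHborel : MeasurableSet {p : XH × XH | EH p.1 p.2})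
    (F : YF → YF → Prop) (hFcb : CountableBorelER F)
    (hred : BorelRed EH F)
    (hEHnot : ∀ (W : Type) [MeasurableSpace W] [StandardBorelSpace W]
      (F' : W → W → Prop), CountableBorelER F' →
        ¬ (BorelRed EH F' ∧ BorelRed F' EH))
    -- Kechris–Louveau: `E₁` is not Borel reducible to any idealistic Borel equivalence relation
    (hKL : ∀ (W : Type) [MeasurableSpace W] [StandardBorelSpace W]
      (E' : W → W → Prop), Equivalence E' → MeasurableSet {p : W × W | E' p.1 p.2} →
        Idealistic E' → ¬ BorelRed E1 E')
    -- Kechris–Macdonald: idealistic `E' ≤_B` Borel `F''` implies `E' ⊑_cB F''`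
    (hKM : ∀ (V W : Type) [MeasurableSpace V] [StandardBorelSpace V]
      [MeasurableSpace W] [StandardBorelSpace W]
      (E' : V → V → Prop) (F'' : W → W → Prop),
        Equivalence E' → Idealistic E' → Equivalence F'' →
        MeasurableSet {p : W × W | F'' p.1 p.2} → BorelRed E' F'' →
        ∃ A : Set W, MeasurableSet A ∧ (∀ w w', F'' w w' → w ∈ A → w' ∈ A) ∧
          ClasswiseBorelIso E' (fun u v : A => F'' u v))
    -- countable Borel equivalence relations are idealistic
    (hCBid : ∀ (W : Type) [MeasurableSpace W] [StandardBorelSpace W]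
      (F' : W → W → Prop), CountableBorelER F' → Idealistic F')
    -- invariant Borel restrictions of countable Borel equivalence relations are countable Borel
    (hrestr : ∀ (W : Type) [MeasurableSpace W] [StandardBorelSpace W]
      (F' : W → W → Prop), CountableBorelER F' →
        ∀ A : Set W, MeasurableSet A → (∀ w w', F' w w' → w ∈ A → w' ∈ A) →
          CountableBorelER (fun u v : A => F' u v)) :
    ¬ BorelRed E1 EH ∧
      ∀ (W : Type) [MeasurableSpace W] [StandardBorelSpace W] (E' : W → W → Prop),
        Equivalence E' → Idealistic E' → ¬ (BorelRed EH E' ∧ BorelRed E' EH) := by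
  
  constructor
  · intro h1
    exact hKL YF F hFcb.1 hFcb.2.1 (hCBid YF F hFcb) (borelRed_trans h1 hred)
  · intro W _ _ E' hE'eq hE'id ⟨hEHE', hE'EH⟩
    have hE'F : BorelRed E' F := borelRed_trans hE'EH hred
    obtain ⟨A, hA, hAinv, hiso⟩ := hKM W YF E' F hE'eq hE'id hFcb.1 hFcb.2.1 hE'F
    haveI : StandardBorelSpace A := hA.standardBorel
    have hFA := hrestr YF F hFcb A hA hAinv
    obtain ⟨f, g, ⟨hf, hfr⟩, ⟨hg, hgr⟩, _, _⟩ := hiso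
    exact hEHnot A (fun u v : A => F u v) hFA
      ⟨borelRed_trans hEHE' ⟨f, hf, hfr⟩, borelRed_trans ⟨g, hg, hgr⟩ hE'EH⟩
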